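/- Let W = (P, Γ, Δ, S) be a weighted pushdown system over an idempotent semiring S whose order ⊑ is total and in which extend preserves inequality, and fix c_f = p_f ε. If the (infinite) equation system (1) has a witness component, i.e., some configuration c such that the set {ks(k)_{[c]} : k ∈ ℕ} of values of the Kleene sequence of (1) at [c] is infinite, then the finite equation system (2) also has a witness component, i.e., some triple (p, X, q) such that {ks(k)_{[pXq]} : k ∈ ℕ} is infinite. (Theorem 2, negative case.) -/

import Mathlib

universe u v w

/-- An idempotent semiring `(D, ⊕, ⊗, 0̄, 1̄)` (Definition 1). -/
structure IdemSemiring' (D : Type u) where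
  add : D → D → D
  mul : D → D → D
  zero : D
  one : D
  add_assoc : ∀ a b c, add (add a b) c = add a (add b c)
  add_comm : ∀ a b, add a b = add b a
  add_zero : ∀ a, add a zero = a
  mul_assoc : ∀ a b c, mul (mul a b) c = mul a (mul b c)
  one_mul : ∀ a, mul one a = a
  mul_one : ∀ a, mul a one = a
  mul_add : ∀ a b c, mul a (add b c) = add (mul a b) (mul a c)
  add_mul : ∀ a b c, mul (add a b) c = add (mul a c) (mul b c)
  mul_zero : ∀ a, mul a zero = zero
  zero_mul : ∀ a, mul zero a = zero
  add_idem : ∀ a, add a a = a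

/-- The natural order: `a ⊑ b` iff `a ⊕ b = a` (Definition 2). -/
def IdemSemiring'.le {D : Type u} (S : IdemSemiring' D) (a b : D) : Prop :=
  S.add a b = a

/-- Extend preserves inequality: `a ≠ b → a ⊗ c ≠ b ⊗ c` for `a, b, c ≠ 0̄` (Definition 3). -/
def PreservesIneq {D : Type u} (S : IdemSemiring' D) : Prop :=
  ∀ a b c : D, a ≠ S.zero → b ≠ S.zero → c ≠ S.zero → a ≠ b → S.mul a c ≠ S.mul b c

/-- Combine `⨁` of a list of semiring elements (`0̄` for the empty list). -/
def combineList {D : Type u} (S : IdemSemiring' D) (l : List D) : D :=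
  l.foldr S.add S.zero

/-- Extend `⨂` of a list of semiring elements (`1̄` for the empty list). -/
def prodList {D : Type u} (S : IdemSemiring' D) (l : List D) : D :=
  l.foldr S.mul S.one

/-- A rule `pX —d→ qα` of a weighted pushdown system. -/
structure PDSRule (P : Type v) (Γ : Type w) (D : Type u) where
  p : P
  X : Γ
  d : D
  q : P
  α : List Γ

/-- A configuration `pγ`. -/
abbrev PDSConfig (P : Type v) (Γ : Type w) := P × List Γ

/-- One step using rule `r` : `pXγ ⟶ᵣ qαγ`. -/
def StepBy {P : Type v} {Γ : Type w} {D : Type u} (r : PDSRule P Γ D)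
    (c c' : PDSConfig P Γ) : Prop :=
  ∃ γ : List Γ, c = (r.p, r.X :: γ) ∧ c' = (r.q, r.α ++ γ)

/-- `Steps σ c c'` : the rule sequence `σ` leads from `c` to `c'`. -/
def Steps {P : Type v} {Γ : Type w} {D : Type u} :
    List (PDSRule P Γ D) → PDSConfig P Γ → PDSConfig P Γ → Prop
  | [], c, c' => c = c'
  | r :: σ, c, c' => ∃ c'', StepBy r c c'' ∧ Steps σ c'' c'

/-- The weight `v(σ) = d_{r₁} ⊗ ⋯ ⊗ d_{r_n}` of a rule sequence (with `v(ε) = 1̄`). -/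
def seqWeight {P : Type v} {Γ : Type w} {D : Type u} (S : IdemSemiring' D)
    (σ : List (PDSRule P Γ D)) : D :=
  σ.foldr (fun r acc => S.mul r.d acc) S.one

/-- Applies rule `r` to configuration `c`, if possible. -/
def applyRule? {P : Type v} {Γ : Type w} {D : Type u} [DecidableEq P] [DecidableEq Γ]
    (r : PDSRule P Γ D) (c : PDSConfig P Γ) : Option (PDSConfig P Γ) :=
  match c.2 with
  | [] => none
  | X :: γ => if r.p = c.1 ∧ r.X = X then some (r.q, r.α ++ γ) else none

/-- `I(c)` : `1̄` if `c = c_f` and `0̄` otherwise. -/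
def Ifun {P : Type v} {Γ : Type w} {D : Type u} [DecidableEq P] [DecidableEq Γ]
    (S : IdemSemiring' D) (cf c : PDSConfig P Γ) : D :=
  if c = cf then S.one else S.zero

/-- Right-hand side of equation system (1): `[c] = I(c) ⊕ ⨁_{c ⟶ᵣ c'} (d_r ⊗ [c'])`. -/
def rhs1 {P : Type v} {Γ : Type w} {D : Type u} [DecidableEq P] [DecidableEq Γ]
    (S : IdemSemiring' D) (Δ : List (PDSRule P Γ D)) (cf : PDSConfig P Γ)
    (g : PDSConfig P Γ → D) (c : PDSConfig P Γ) : D :=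
  S.add (Ifun S cf c)
    (Δ.foldr (fun r acc =>
      S.add (match applyRule? r c with
             | some c' => S.mul r.d (g c')
             | none => S.zero) acc) S.zero)

/-- The Kleene sequence of equation system (1), starting from the all-`0̄` assignment. -/
def ks1 {P : Type v} {Γ : Type w} {D : Type u} [DecidableEq P] [DecidableEq Γ]
    (S : IdemSemiring' D) (Δ : List (PDSRule P Γ D)) (cf : PDSConfig P Γ) :
    ℕ → PDSConfig P Γ → D
  | 0 => fun _ => S.zero
  | k + 1 => rhs1 S Δ cf (ks1 S Δ cf k)

/-- Right-hand side of equation system (2) for the pop-sequence variables `[pXq]` :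
`[pXq] = ⨁_{pX—d→qε} d ⊕ ⨁_{pX—d→rY} (d ⊗ [rYq]) ⊕ ⨁_{pX—d→rYZ} (d ⊗ ⨁_{s} ([rYs] ⊗ [sZq]))`. -/
noncomputable def rhs2 {P : Type v} {Γ : Type w} {D : Type u}
    [Fintype P] [DecidableEq P] [DecidableEq Γ]
    (S : IdemSemiring' D) (Δ : List (PDSRule P Γ D))
    (g : P × Γ × P → D) : P × Γ × P → D :=
  fun x =>
    match x with
    | (p, X, q) =>
      Δ.foldr (fun r acc =>
        S.add
          (if r.p = p ∧ r.X = X then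
            match r.α with
            | [] => if r.q = q then r.d else S.zero
            | [Y] => S.mul r.d (g (r.q, Y, q))
            | [Y, Z] =>
                S.mul r.d
                  (combineList S ((Finset.univ : Finset P).toList.map
                    (fun s => S.mul (g (r.q, Y, s)) (g (s, Z, q)))))
            | _ => S.zero
           else S.zero)
          acc) S.zero

/-- The Kleene sequence of equation system (2), starting from the all-`0̄` assignment. -/
noncomputable def ks2 {P : Type v} {Γ : Type w} {D : Type u}
    [Fintype P] [DecidableEq P] [DecidableEq Γ]
    (S : IdemSemiring' D) (Δ : List (PDSRule P Γ D)) :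
    ℕ → P × Γ × P → D
  | 0 => fun _ => S.zero
  | k + 1 => rhs2 S Δ (ks2 S Δ k)

/-- `σ` is a pop sequence for `(p, X, q)` over the rules `Δ` : `pX ⟶_σ qε`. -/
def PopSeq {P : Type v} {Γ : Type w} {D : Type u}
    (Δ σ : List (PDSRule P Γ D)) (p : P) (X : Γ) (q : P) : Prop :=
  (∀ r ∈ σ, r ∈ Δ) ∧ Steps σ (p, [X]) (q, ([] : List Γ))

/-!
Both Kleene sequences decrease (`0̄` is the top of `⊑`), so a component takes finitely many
values iff it is eventually constant. Suppose every `[pXq]` is eventually constant. Then its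
limit lies below the weight of every pop sequence `pX ⟶ qε`, and `ks1 m (pXγ) ⊑ [pXq] ⊗ ks1 j (qγ)`
once `m` is large compared with `j`. A run from `pXγ` to `p_f ε` splits into a pop sequence
for `pX` and a run from `qγ`, so by induction on `γ` some iterate of `[pγ]` lies below the
weight of every run from `pγ`, and therefore below every later iterate, each of which is a
combination of such weights.
-/

section EventuallyConstant

variable {ι α : Type*}

theorem exists_common_stable_index [Finite ι] {f : ι → ℕ → α}
    (h : ∀ i, ∃ N, ∀ k, N ≤ k → f i k = f i N) : ∃ N, ∀ i k, N ≤ k → f i k = f i N := by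
  choose N hN using h
  cases nonempty_fintype ι
  refine ⟨Finset.univ.sup N, fun i k hk => ?_⟩
  have hi : N i ≤ Finset.univ.sup N := Finset.le_sup (Finset.mem_univ i)
  rw [hN i k (hi.trans hk), hN i _ hi]

theorem finite_range_of_stable {f : ℕ → α} {M : ℕ} (hM : ∀ k, M ≤ k → f k = f M) :
    (Set.range f).Finite := by
  refine ((Set.finite_Iic M).image f).subset ?_
  rintro _ ⟨k, rfl⟩
  rcases le_total k M with hk | hk
  · exact ⟨k, hk, rfl⟩
  · exact ⟨M, Set.mem_Iic.mpr le_rfl, (hM k hk).symm⟩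

end EventuallyConstant

namespace IdemSemiring'

variable {D : Type*} (S : IdemSemiring' D)

theorem le_refl (a : D) : S.le a a := S.add_idem a

variable {S}

theorem le_trans {a b c : D} (hab : S.le a b) (hbc : S.le b c) : S.le a c := by
  unfold IdemSemiring'.le at *
  rw [← hab, S.add_assoc, hbc]

theorem le_antisymm {a b : D} (hab : S.le a b) (hba : S.le b a) : a = b := by
  unfold IdemSemiring'.le at *
  rw [← hab, S.add_comm, hba]

theorem le_zero (a : D) : S.le a S.zero := S.add_zero a

theorem le_mul_zero (a w : D) : S.le a (S.mul w S.zero) := (S.mul_zero w).symm ▸ le_zero a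

theorem le_zero_mul (a u : D) : S.le a (S.mul S.zero u) := (S.zero_mul u).symm ▸ le_zero a

theorem le_add {a b c : D} (hb : S.le a b) (hc : S.le a c) : S.le a (S.add b c) := by
  unfold IdemSemiring'.le at *
  rw [← S.add_assoc, hb, hc]

theorem add_le_left (a b : D) : S.le (S.add a b) a := by
  unfold IdemSemiring'.le
  rw [S.add_assoc, S.add_comm b a, ← S.add_assoc, S.add_idem]

theorem add_le_right (a b : D) : S.le (S.add a b) b := by
  rw [S.add_comm]; exact add_le_left b a

theorem add_le_add {a a' b b' : D} (ha : S.le a a') (hb : S.le b b') :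
    S.le (S.add a b) (S.add a' b') :=
  le_add (le_trans (add_le_left a b) ha) (le_trans (add_le_right a b) hb)

theorem mul_le_mul {a a' b b' : D} (ha : S.le a a') (hb : S.le b b') :
    S.le (S.mul a b) (S.mul a' b') := by
  have hleft : S.le (S.mul a b) (S.mul a' b) := by
    unfold IdemSemiring'.le at *
    rw [← S.add_mul, ha]
  have hright : S.le (S.mul a' b) (S.mul a' b') := by
    unfold IdemSemiring'.le at *
    rw [← S.mul_add, hb]
  exact le_trans hleft hright

theorem mul_le_mul_left (a : D) {b b' : D} (hb : S.le b b') : S.le (S.mul a b) (S.mul a b') :=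
  mul_le_mul (S.le_refl a) hb

/-- Some value is taken infinitely often, and it traps every later term. -/
theorem exists_stable_of_antitone_of_finite_range {f : ℕ → D}
    (hf : ∀ {k k' : ℕ}, k ≤ k' → S.le (f k') (f k)) (hfin : (Set.range f).Finite) :
    ∃ N, ∀ k, N ≤ k → f k = f N := by
  have : Finite (Set.range f) := hfin.to_subtype
  obtain ⟨⟨a, _⟩, hfiber⟩ := Finite.exists_infinite_fiber (Set.rangeFactorization f)
  have hfiber : {k | f k = a}.Infinite := by
    simpa [Set.infinite_coe_iff, Set.preimage, Set.rangeFactorization, Subtype.ext_iff]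
      using hfiber
  obtain ⟨N, hN : f N = a⟩ := hfiber.nonempty
  refine ⟨N, fun k hk => ?_⟩
  obtain ⟨k', hk' : f k' = a, hkk'⟩ := hfiber.exists_gt k
  exact le_antisymm (hf hk) (hN ▸ hk' ▸ hf hkk'.le)

end IdemSemiring'

open IdemSemiring'

section CombineList

variable {α D : Type*} {S : IdemSemiring' D}

theorem foldr_add_eq_combineList (l : List α) (f : α → D) :
    l.foldr (fun x acc => S.add (f x) acc) S.zero = combineList S (l.map f) :=
  List.foldr_map.symm

theorem combineList_map_le {l : List α} {x : α} (hx : x ∈ l) (f : α → D) :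
    S.le (combineList S (l.map f)) (f x) := by
  induction l with
  | nil => cases hx
  | cons y l ih =>
    rcases List.mem_cons.mp hx with rfl | hx
    · exact add_le_left _ _
    · exact le_trans (add_le_right _ _) (ih hx)

theorem le_mul_combineList {a w : D} {l : List α} {f : α → D}
    (h : ∀ x ∈ l, S.le a (S.mul w (f x))) : S.le a (S.mul w (combineList S (l.map f))) := by
  induction l with
  | nil => exact le_mul_zero a w
  | cons x l ih =>
    show S.le a (S.mul w (S.add (f x) _))
    rw [S.mul_add]
    exact le_add (h x List.mem_cons_self) (ih fun y hy => h y (List.mem_cons_of_mem x hy))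

theorem le_combineList_mul {a u : D} {l : List α} {f : α → D}
    (h : ∀ x ∈ l, S.le a (S.mul (f x) u)) : S.le a (S.mul (combineList S (l.map f)) u) := by
  induction l with
  | nil => exact le_zero_mul a u
  | cons x l ih =>
    show S.le a (S.mul (S.add (f x) _) u)
    rw [S.add_mul]
    exact le_add (h x List.mem_cons_self) (ih fun y hy => h y (List.mem_cons_of_mem x hy))

theorem combineList_map_mono {l : List α} {f g : α → D} (h : ∀ x ∈ l, S.le (f x) (g x)) :
    S.le (combineList S (l.map f)) (combineList S (l.map g)) := by
  have h₁ := le_mul_combineList (w := S.one) fun x hx => (S.one_mul (g x)).symm ▸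
    le_trans (combineList_map_le hx f) (h x hx)
  rwa [S.one_mul] at h₁

end CombineList

section Runs

variable {P Γ D : Type*}

theorem seqWeight_cons (S : IdemSemiring' D) (r : PDSRule P Γ D) (σ : List (PDSRule P Γ D)) :
    seqWeight S (r :: σ) = S.mul r.d (seqWeight S σ) := rfl

theorem seqWeight_append (S : IdemSemiring' D) (σ₁ σ₂ : List (PDSRule P Γ D)) :
    seqWeight S (σ₁ ++ σ₂) = S.mul (seqWeight S σ₁) (seqWeight S σ₂) := by
  induction σ₁ with
  | nil => exact (S.one_mul _).symm
  | cons r σ ih => rw [List.cons_append, seqWeight_cons, seqWeight_cons, ih, S.mul_assoc]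

theorem Steps.cons_inv {r : PDSRule P Γ D} {σ : List (PDSRule P Γ D)} {p : P} {X : Γ}
    {γ : List Γ} {c : PDSConfig P Γ} (h : Steps (r :: σ) (p, X :: γ) c) :
    r.p = p ∧ r.X = X ∧ Steps σ (r.q, r.α ++ γ) c := by
  obtain ⟨_, ⟨γ', hc, rfl⟩, hrest⟩ := h
  simp only [Prod.mk.injEq, List.cons.injEq] at hc
  obtain ⟨rfl, rfl, rfl⟩ := hc
  exact ⟨rfl, rfl, hrest⟩

theorem Steps.eq_nil_of_stack_nil {σ : List (PDSRule P Γ D)} {p : P} {c : PDSConfig P Γ}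
    (h : Steps σ (p, ([] : List Γ)) c) : σ = [] := by
  cases σ with
  | nil => rfl
  | cons r σ =>
    obtain ⟨_, ⟨_, hc, _⟩, _⟩ := h
    simp at hc

theorem Steps.split_append {σ : List (PDSRule P Γ D)} {p qf : P} {α γ : List Γ}
    (h : Steps σ (p, α ++ γ) (qf, [])) :
    ∃ q σ₁ σ₂, σ = σ₁ ++ σ₂ ∧ Steps σ₁ (p, α) (q, []) ∧ Steps σ₂ (q, γ) (qf, []) := by
  induction σ generalizing p α with
  | nil =>
    obtain ⟨rfl, hnil⟩ := Prod.mk.inj (h : (p, α ++ γ) = (qf, []))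
    obtain ⟨rfl, rfl⟩ := List.append_eq_nil_iff.mp hnil
    exact ⟨p, [], [], rfl, rfl, rfl⟩
  | cons r σ ih =>
    cases α with
    | nil => exact ⟨p, [], r :: σ, rfl, rfl, h⟩
    | cons X α =>
      obtain ⟨rfl, rfl, hrest⟩ := Steps.cons_inv h
      change Steps σ (r.q, r.α ++ (α ++ γ)) _ at hrest
      rw [← List.append_assoc] at hrest
      obtain ⟨q, σ₁, σ₂, rfl, h₁, h₂⟩ := ih hrest
      exact ⟨q, r :: σ₁, σ₂, rfl, ⟨_, ⟨α, rfl, rfl⟩, h₁⟩, h₂⟩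

end Runs

section System1

variable {P Γ D : Type*} [DecidableEq P] [DecidableEq Γ]

theorem applyRule?_eq_some_iff {r : PDSRule P Γ D} {c c' : PDSConfig P Γ} :
    applyRule? r c = some c' ↔ StepBy r c c' := by
  obtain ⟨p, _ | ⟨X, γ⟩⟩ := c
  · simp [applyRule?, StepBy]
  · simp only [applyRule?, StepBy, Prod.mk.injEq, List.cons.injEq]
    constructor
    · intro h
      split_ifs at h with hpX
      cases h
      exact ⟨γ, ⟨hpX.1.symm, hpX.2.symm, rfl⟩, rfl⟩
    · rintro ⟨γ, ⟨rfl, rfl, rfl⟩, rfl⟩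
      simp

variable {S : IdemSemiring' D} {Δ : List (PDSRule P Γ D)} {cf : PDSConfig P Γ}

theorem rhs1_eq (g : PDSConfig P Γ → D) (c : PDSConfig P Γ) :
    rhs1 S Δ cf g c = S.add (Ifun S cf c) (combineList S (Δ.map fun r =>
      match applyRule? r c with
      | some c' => S.mul r.d (g c')
      | none => S.zero)) := by
  rw [rhs1, foldr_add_eq_combineList]

theorem rhs1_mono {g g' : PDSConfig P Γ → D} (h : ∀ c, S.le (g c) (g' c)) (c : PDSConfig P Γ) :
    S.le (rhs1 S Δ cf g c) (rhs1 S Δ cf g' c) := by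
  rw [rhs1_eq, rhs1_eq]
  refine add_le_add (S.le_refl _) (combineList_map_mono fun r _ => ?_)
  cases applyRule? r c with
  | none => exact S.le_refl _
  | some c' => exact mul_le_mul_left _ (h c')

theorem ks1_succ_le (k : ℕ) (c : PDSConfig P Γ) : S.le (ks1 S Δ cf (k + 1) c) (ks1 S Δ cf k c) := by
  induction k generalizing c with
  | zero => exact le_zero _
  | succ k ih => exact rhs1_mono ih c

theorem ks1_antitone {k k' : ℕ} (hk : k ≤ k') (c : PDSConfig P Γ) :
    S.le (ks1 S Δ cf k' c) (ks1 S Δ cf k c) := by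
  induction hk with
  | refl => exact S.le_refl _
  | step _ ih => exact le_trans (ks1_succ_le _ c) ih

theorem ks1_succ_le_one (k : ℕ) : S.le (ks1 S Δ cf (k + 1) cf) S.one := by
  simpa [ks1, rhs1_eq, Ifun] using add_le_left (S := S) S.one _

theorem ks1_succ_le_of_stepBy {r : PDSRule P Γ D} (hr : r ∈ Δ) {c c' : PDSConfig P Γ}
    (hstep : StepBy r c c') (k : ℕ) :
    S.le (ks1 S Δ cf (k + 1) c) (S.mul r.d (ks1 S Δ cf k c')) := by
  rw [ks1, rhs1_eq]
  refine le_trans (add_le_right _ _) (le_trans (combineList_map_le hr _) ?_)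
  rw [applyRule?_eq_some_iff.mpr hstep]
  exact S.le_refl _

theorem ks1_le_seqWeight {σ : List (PDSRule P Γ D)} (hσ : σ ⊆ Δ) {c : PDSConfig P Γ}
    (hrun : Steps σ c cf) {k : ℕ} (hk : σ.length < k) : S.le (ks1 S Δ cf k c) (seqWeight S σ) := by
  obtain ⟨k, rfl⟩ : ∃ k', k = k' + 1 := ⟨k - 1, by omega⟩
  induction σ generalizing c k with
  | nil => exact (hrun : c = cf) ▸ ks1_succ_le_one k
  | cons r σ ih =>
    obtain ⟨c', hstep, hrest⟩ := hrun
    obtain ⟨k, rfl⟩ : ∃ k', k = k' + 1 := ⟨k - 1, by simp at hk; omega⟩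
    exact le_trans (ks1_succ_le_of_stepBy (hσ List.mem_cons_self) hstep _)
      (mul_le_mul_left _ (ih (List.subset_of_cons_subset hσ) hrest (k := k) (by simpa using hk)))

/-- The left factor `w` accumulates the weight of the rules already taken. -/
theorem le_mul_ks1 {a w : D} {c : PDSConfig P Γ}
    (h : ∀ σ ⊆ Δ, Steps σ c cf → S.le a (S.mul w (seqWeight S σ))) (k : ℕ) :
    S.le a (S.mul w (ks1 S Δ cf k c)) := by
  induction k generalizing w c with
  | zero => exact le_mul_zero a w
  | succ k ih =>
    rw [ks1, rhs1_eq, S.mul_add]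
    refine le_add ?_ (le_mul_combineList fun r hr => ?_)
    · unfold Ifun
      split_ifs with hc
      · exact h [] (List.nil_subset _) hc
      · exact le_mul_zero a w
    · rcases happ : applyRule? r c with _ | c'
      · exact le_mul_zero a w
      · rw [← S.mul_assoc]
        refine ih fun σ hσ hrun => ?_
        rw [S.mul_assoc, ← seqWeight_cons]
        exact h (r :: σ) (List.cons_subset.mpr ⟨hr, hσ⟩)
          ⟨c', applyRule?_eq_some_iff.mp happ, hrun⟩

theorem ks1_eq_of_le_seqWeight {M : ℕ} {c : PDSConfig P Γ}
    (h : ∀ σ ⊆ Δ, Steps σ c cf → S.le (ks1 S Δ cf M c) (seqWeight S σ)) {k : ℕ} (hk : M ≤ k) :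
    ks1 S Δ cf k c = ks1 S Δ cf M c := by
  refine le_antisymm (ks1_antitone hk c) ?_
  have := le_mul_ks1 (w := S.one) (fun σ hσ hrun => by rw [S.one_mul]; exact h σ hσ hrun) k
  rwa [S.one_mul] at this

theorem ks1_le_seqWeight_of_stable {M : ℕ} {c : PDSConfig P Γ}
    (hM : ∀ k, M ≤ k → ks1 S Δ cf k c = ks1 S Δ cf M c) {σ : List (PDSRule P Γ D)} (hσ : σ ⊆ Δ)
    (hrun : Steps σ c cf) : S.le (ks1 S Δ cf M c) (seqWeight S σ) :=
  hM (max M (σ.length + 1)) (le_max_left _ _) ▸ ks1_le_seqWeight hσ hrun (by omega)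

end System1

section System2

variable {P Γ D : Type*} [Fintype P] [DecidableEq P] [DecidableEq Γ]
  {S : IdemSemiring' D} {Δ : List (PDSRule P Γ D)}

theorem rhs2_mono {g g' : P × Γ × P → D} (h : ∀ x, S.le (g x) (g' x)) (x : P × Γ × P) :
    S.le (rhs2 S Δ g x) (rhs2 S Δ g' x) := by
  obtain ⟨p, X, q⟩ := x
  simp only [rhs2, foldr_add_eq_combineList]
  refine combineList_map_mono fun r _ => ?_
  by_cases hpX : r.p = p ∧ r.X = X
  · simp only [if_pos hpX]
    generalize r.α = α
    rcases α with _ | ⟨Y, _ | ⟨Z, _ | _⟩⟩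
    · exact S.le_refl _
    · exact mul_le_mul_left _ (h _)
    · exact mul_le_mul_left _ (combineList_map_mono fun s _ => mul_le_mul (h _) (h _))
    · exact S.le_refl _
  · simp only [if_neg hpX]
    exact S.le_refl _

theorem ks2_succ_le (k : ℕ) (x : P × Γ × P) : S.le (ks2 S Δ (k + 1) x) (ks2 S Δ k x) := by
  induction k generalizing x with
  | zero => exact le_zero _
  | succ k ih => exact rhs2_mono ih x

theorem ks2_antitone {k k' : ℕ} (hk : k ≤ k') (x : P × Γ × P) :
    S.le (ks2 S Δ k' x) (ks2 S Δ k x) := by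
  induction hk with
  | refl => exact S.le_refl _
  | step _ ih => exact le_trans (ks2_succ_le _ x) ih

theorem ks2_succ_le_of_pop {r : PDSRule P Γ D} (hr : r ∈ Δ) (hα : r.α = []) (k : ℕ) :
    S.le (ks2 S Δ (k + 1) (r.p, r.X, r.q)) r.d := by
  simp only [ks2, rhs2, foldr_add_eq_combineList]
  refine le_trans (combineList_map_le hr _) ?_
  simp only [and_self, if_true, hα]
  exact S.le_refl _

theorem ks2_succ_le_of_push {r : PDSRule P Γ D} (hr : r ∈ Δ) {Y : Γ} (hα : r.α = [Y])
    (q : P) (k : ℕ) :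
    S.le (ks2 S Δ (k + 1) (r.p, r.X, q)) (S.mul r.d (ks2 S Δ k (r.q, Y, q))) := by
  simp only [ks2, rhs2, foldr_add_eq_combineList]
  refine le_trans (combineList_map_le hr _) ?_
  simp only [and_self, if_true, hα]
  exact S.le_refl _

theorem ks2_succ_le_of_push₂ {r : PDSRule P Γ D} (hr : r ∈ Δ) {Y Z : Γ} (hα : r.α = [Y, Z])
    (q s : P) (k : ℕ) :
    S.le (ks2 S Δ (k + 1) (r.p, r.X, q))
      (S.mul r.d (S.mul (ks2 S Δ k (r.q, Y, s)) (ks2 S Δ k (s, Z, q)))) := by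
  simp only [ks2, rhs2, foldr_add_eq_combineList]
  refine le_trans (combineList_map_le hr _) ?_
  simp only [and_self, if_true, hα]
  exact mul_le_mul_left _ (combineList_map_le (Finset.mem_toList.mpr (Finset.mem_univ s)) _)

theorem ks2_le_seqWeight (hΔ : ∀ r ∈ Δ, r.α.length ≤ 2) {k : ℕ} :
    ∀ {σ : List (PDSRule P Γ D)} {p : P} {X : Γ} {q : P}, PopSeq Δ σ p X q → σ.length < k →
      S.le (ks2 S Δ k (p, X, q)) (seqWeight S σ) := by
  induction k with
  | zero => intro _ _ _ _ _ hk; omega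
  | succ k ih =>
    rintro (_ | ⟨r, σ⟩) p X q ⟨hσ, hrun⟩ hk
    · cases (Prod.mk.inj (hrun : (p, [X]) = (q, []))).2
    obtain ⟨rfl, rfl, hrest⟩ := Steps.cons_inv hrun
    obtain ⟨hr, hσ⟩ := List.cons_subset.mp hσ
    have hk : σ.length < k := by simpa using hk
    rw [seqWeight_cons]
    match hα : r.α, hΔ r hr with
    | [], _ =>
      rw [hα] at hrest
      obtain rfl := Steps.eq_nil_of_stack_nil hrest
      cases (Prod.mk.inj (hrest : (r.q, []) = (q, []))).1
      exact (S.mul_one r.d).symm ▸ ks2_succ_le_of_pop hr hα k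
    | [Y], _ =>
      rw [hα] at hrest
      exact le_trans (ks2_succ_le_of_push hr hα q k) (mul_le_mul_left _ (ih ⟨hσ, hrest⟩ hk))
    | [Y, Z], _ =>
      rw [hα] at hrest
      obtain ⟨s, σ₁, σ₂, rfl, h₁, h₂⟩ := Steps.split_append (α := [Y]) (γ := [Z]) hrest
      obtain ⟨hσ₁, hσ₂⟩ := List.append_subset.mp hσ
      have hk : σ₁.length < k ∧ σ₂.length < k := by simp at hk; omega
      rw [seqWeight_append]
      exact le_trans (ks2_succ_le_of_push₂ hr hα q s k)
        (mul_le_mul_left _ (mul_le_mul (ih ⟨hσ₁, h₁⟩ hk.1) (ih ⟨hσ₂, h₂⟩ hk.2)))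
    | _ :: _ :: _ :: _, hlen => simp at hlen

theorem ks2_le_seqWeight_of_stable (hΔ : ∀ r ∈ Δ, r.α.length ≤ 2) {N : ℕ} {p : P} {X : Γ} {q : P}
    (hN : ∀ k, N ≤ k → ks2 S Δ k (p, X, q) = ks2 S Δ N (p, X, q)) {σ : List (PDSRule P Γ D)}
    (hσ : PopSeq Δ σ p X q) : S.le (ks2 S Δ N (p, X, q)) (seqWeight S σ) :=
  hN (max N (σ.length + 1)) (le_max_left _ _) ▸ ks2_le_seqWeight hΔ hσ (by omega)

end System2

section Stabilization

variable {P Γ D : Type*} [Fintype P] [DecidableEq P] [DecidableEq Γ]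
  {S : IdemSemiring' D} {Δ : List (PDSRule P Γ D)} {cf : PDSConfig P Γ}

/-- `2 ^ k - 1` bounds the length of the runs that `k` rounds of (2) account for: a rule
`pX —d→ rYZ` joins two of them, and `2 (2 ^ k - 1) + 1 = 2 ^ (k + 1) - 1`. -/
theorem ks1_le_ks2_mul_ks1 {k j m : ℕ} (hm : j + 2 ^ k ≤ m + 1) (p : P) (X : Γ) (q : P)
    (γ : List Γ) :
    S.le (ks1 S Δ cf m (p, X :: γ)) (S.mul (ks2 S Δ k (p, X, q)) (ks1 S Δ cf j (q, γ))) := by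
  induction k generalizing j m p X q γ with
  | zero => exact le_zero_mul _ _
  | succ k ih =>
    have hpow : 2 ^ (k + 1) = 2 * 2 ^ k := by ring
    have hpos : 1 ≤ 2 ^ k := Nat.one_le_two_pow
    obtain ⟨m, rfl⟩ : ∃ m', m = m' + 1 := ⟨m - 1, by omega⟩
    simp only [ks2, rhs2, foldr_add_eq_combineList]
    refine le_combineList_mul fun r hr => ?_
    by_cases hpX : r.p = p ∧ r.X = X
    · obtain ⟨rfl, rfl⟩ := hpX
      simp only [and_self, if_true]
      refine le_trans (ks1_succ_le_of_stepBy hr ⟨γ, rfl, rfl⟩ m) ?_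
      generalize r.α = α
      rcases α with _ | ⟨Y, _ | ⟨Z, _ | _⟩⟩ <;> dsimp only
      · split_ifs with hq
        · subst hq
          exact mul_le_mul_left _ (ks1_antitone (by omega) _)
        · exact le_zero_mul _ _
      · rw [S.mul_assoc]
        exact mul_le_mul_left _ (ih (by omega) _ _ _ _)
      · rw [S.mul_assoc]
        refine mul_le_mul_left _ (le_combineList_mul fun s _ => ?_)
        rw [S.mul_assoc]
        exact le_trans (ih (j := j + 2 ^ k - 1) (by omega) _ _ s _)
          (mul_le_mul_left _ (ih (by omega) _ _ _ _))
      · exact le_zero_mul _ _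
    · simp only [if_neg hpX]
      exact le_zero_mul _ _

theorem ks1_stabilizes_of_ks2_stabilizes (hΔ : ∀ r ∈ Δ, r.α.length ≤ 2) {pf : P}
    (h2 : ∀ x, ∃ N, ∀ k, N ≤ k → ks2 S Δ k x = ks2 S Δ N x) (γ : List Γ) :
    ∃ M, ∀ p k, M ≤ k → ks1 S Δ (pf, []) k (p, γ) = ks1 S Δ (pf, []) M (p, γ) := by
  induction γ with
  | nil =>
    refine ⟨1, fun p k hk => ks1_eq_of_le_seqWeight (fun σ hσ hrun => ?_) hk⟩
    obtain rfl := Steps.eq_nil_of_stack_nil hrun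
    exact ks1_le_seqWeight hσ hrun Nat.one_pos
  | cons X γ ih =>
    obtain ⟨M, hM⟩ := ih
    obtain ⟨N, hN⟩ := exists_common_stable_index fun (pq : P × P) => h2 (pq.1, X, pq.2)
    refine ⟨M + 2 ^ N, fun p k hk => ks1_eq_of_le_seqWeight (fun σ hσ hrun => ?_) hk⟩
    obtain ⟨q, σ₁, σ₂, rfl, h₁, h₂⟩ := Steps.split_append (α := [X]) hrun
    obtain ⟨hσ₁, hσ₂⟩ := List.append_subset.mp hσ
    rw [seqWeight_append]
    exact le_trans (ks1_le_ks2_mul_ks1 (by omega) p X q γ)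
      (mul_le_mul (ks2_le_seqWeight_of_stable hΔ (hN (p, q)) ⟨hσ₁, h₁⟩)
        (ks1_le_seqWeight_of_stable (hM q) hσ₂ h₂))

end Stabilization

theorem eq1_witness_implies_eq2_witness_general {P : Type v} {Γ : Type w} {D : Type u}
    [Fintype P] [DecidableEq P] [DecidableEq Γ]
    (S : IdemSemiring' D)
    (Δ : List (PDSRule P Γ D)) (hΔ : ∀ r ∈ Δ, r.α.length ≤ 2) (pf : P)
    (hwit : ∃ c : PDSConfig P Γ,
      Set.Infinite (Set.range fun k => ks1 S Δ (pf, ([] : List Γ)) k c)) :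
    ∃ (p : P) (X : Γ) (q : P),
      Set.Infinite (Set.range fun k => ks2 S Δ k (p, X, q)) := by
  by_contra! hfin
  obtain ⟨⟨p, γ⟩, hinf⟩ := hwit
  have h2 (x : P × Γ × P) : ∃ N, ∀ k, N ≤ k → ks2 S Δ k x = ks2 S Δ N x :=
    exists_stable_of_antitone_of_finite_range (ks2_antitone · x) (hfin x.1 x.2.1 x.2.2)
  obtain ⟨M, hM⟩ := ks1_stabilizes_of_ks2_stabilizes hΔ h2 γ
  exact hinf (finite_range_of_stable (hM p))

/-- Theorem 2, negative case: if the infinite equation system (1) has a witness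
component, i.e. a configuration `c` where the Kleene sequence of (1) takes infinitely
many values, then the finite equation system (2) has a witness component as well,
i.e. a triple `(p, X, q)` where the Kleene sequence of (2) takes infinitely many values. -/
theorem eq1_witness_implies_eq2_witness {P : Type v} {Γ : Type w} {D : Type u}
    [Fintype P] [DecidableEq P] [Fintype Γ] [DecidableEq Γ]
    (S : IdemSemiring' D) (htot : ∀ a b : D, S.le a b ∨ S.le b a) (hpi : PreservesIneq S)
    (Δ : List (PDSRule P Γ D)) (hΔ : ∀ r ∈ Δ, r.α.length ≤ 2) (pf : P)
    (hwit : ∃ c : PDSConfig P Γ,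
      Set.Infinite (Set.range fun k => ks1 S Δ (pf, ([] : List Γ)) k c)) :
    ∃ (p : P) (X : Γ) (q : P),
      Set.Infinite (Set.range fun k => ks2 S Δ k (p, X, q)) :=
  eq1_witness_implies_eq2_witness_general S Δ hΔ pf hwit
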